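/- arXiv:1112.2887 — 2 statements merged into one kernel-verified Lean document; each statement's English description precedes it below -/
import Mathlib

section
/- Suppose $(p_n, q_n)$ and $(\tilde p_n, \tilde q_n)$ are two pairs of polynomials, each of degree at most $n$ and not both zero, such that both $p_n(z)e^{-z/2} + q_n(z)e^{z/2}$ and $\tilde p_n(z)e^{-z/2} + \tilde q_n(z)e^{z/2}$ vanish (with multiplicity) at the $2n+1$ interpolation points $z_0,\dots,z_{2n}$. Then $p_n \tilde q_n = \tilde p_n q_n$ as polynomials; in other words, the rational functions $p_n/q_n$ and $\tilde p_n/\tilde q_n$ have the same irreducible form. -/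
/-! Eliminating the exponentials between the two interpolation conditions writes the polynomial
`p q̃ - p̃ q`, of degree at most `2n`, as `ω_{2n+1}` times an entire function. That entire function
agrees with a rational function of negative degree near infinity, so it tends to `0` there and
vanishes by Liouville's theorem. -/

open Polynomial Filter Bornology

theorem Polynomial.degree_mul_sub_mul_le {R : Type*} [CommRing R] {p q p' q' : R[X]}
    {m k : WithBot ℕ} (hp : p.degree ≤ m) (hq : q.degree ≤ k) (hp' : p'.degree ≤ m)
    (hq' : q'.degree ≤ k) : (p * q' - p' * q).degree ≤ m + k :=
  (degree_sub_le _ _).trans <| max_le (degree_mul_le_of_le hp hq') (degree_mul_le_of_le hp' hq)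

theorem Polynomial.degree_prod_X_sub_C {R ι : Type*} [CommRing R] [IsDomain R] [Fintype ι]
    (z : ι → R) : (∏ j, (X - C (z j))).degree = ((Fintype.card ι : ℕ) : WithBot ℕ) := by
  simp [degree_prod, degree_X_sub_C]

theorem Polynomial.eq_zero_of_eval_eq_mul_of_differentiable {D Q : ℂ[X]} {G : ℂ → ℂ}
    (hdeg : D.degree < Q.degree) (hG : Differentiable ℂ G) (hDQ : ∀ w, D.eval w = Q.eval w * G w) :
    D = 0 := by
  have hQ_ne : ∀ᶠ w in cobounded ℂ, Q.eval w ≠ 0 := by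
    rw [Metric.cobounded_eq_cocompact]
    exact cocompact_le_cofinite (eventually_cofinite_not_isRoot (ne_zero_of_degree_gt hdeg))
  have hG_lim : Tendsto G (cobounded ℂ) (nhds 0) := by
    refine (isLittleO_cobounded_of_degree_lt hdeg).tendsto_div_nhds_zero.congr' ?_
    filter_upwards [hQ_ne] with w hw
    rw [hDQ w, mul_div_cancel_left₀ _ hw]
  have hG_zero (w : ℂ) : G w = 0 :=
    hG.apply_eq_of_tendsto_cocompact w (Metric.cobounded_eq_cocompact (α := ℂ) ▸ hG_lim)
  exact Polynomial.funext fun w => by rw [hDQ w, hG_zero w, mul_zero, eval_zero]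

theorem interpolant_irreducible_form_unique_general (n : ℕ) (zpts : Fin (2 * n + 1) → ℂ)
    (p q p' q' : Polynomial ℂ)
    (hdp : p.degree ≤ (n : ℕ)) (hdq : q.degree ≤ (n : ℕ))
    (hdp' : p'.degree ≤ (n : ℕ)) (hdq' : q'.degree ≤ (n : ℕ))
    (h h' : ℂ → ℂ) (hh : Differentiable ℂ h) (hh' : Differentiable ℂ h')
    (hint : ∀ w : ℂ, p.eval w * Complex.exp (-(w / 2)) + q.eval w * Complex.exp (w / 2)
      = (∏ j, (w - zpts j)) * h w)
    (hint' : ∀ w : ℂ, p'.eval w * Complex.exp (-(w / 2)) + q'.eval w * Complex.exp (w / 2)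
      = (∏ j, (w - zpts j)) * h' w) :
    p * q' = p' * q := by
  set ω : ℂ[X] := ∏ j, (X - C (zpts j))
  have hdeg : (p * q' - p' * q).degree < ω.degree := by
    refine (degree_mul_sub_mul_le hdp hdq hdp' hdq').trans_lt ?_
    rw [degree_prod_X_sub_C, Fintype.card_fin]
    exact_mod_cast (by omega : n + n < 2 * n + 1)
  have hfactor (w : ℂ) : (p * q' - p' * q).eval w
      = ω.eval w * ((p.eval w * h' w - p'.eval w * h w) * Complex.exp (-(w / 2))) := by
    have hexp : Complex.exp (w / 2) * Complex.exp (-(w / 2)) = 1 := by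
      rw [← Complex.exp_add, add_neg_cancel, Complex.exp_zero]
    simp only [ω, eval_sub, eval_mul, eval_prod, eval_X, eval_C]
    linear_combination Complex.exp (-(w / 2)) * (p.eval w * hint' w - p'.eval w * hint w)
      - (p.eval w * q'.eval w - p'.eval w * q.eval w) * hexp
  have hentire : Differentiable ℂ
      fun w => (p.eval w * h' w - p'.eval w * h w) * Complex.exp (-(w / 2)) := by
    fun_prop
  exact sub_eq_zero.mp (eq_zero_of_eval_eq_mul_of_differentiable hdeg hentire hfactor)

/-- Uniqueness of the irreducible form: any two nontrivial pairs of polynomials of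
degree at most `n` satisfying the interpolation conditions for `e^z` at the `2n+1`
points satisfy `p * q̃ = p̃ * q`, i.e. they define the same rational function. -/
theorem interpolant_irreducible_form_unique (n : ℕ) (zpts : Fin (2 * n + 1) → ℂ)
    (p q p' q' : Polynomial ℂ)
    (hpq : ¬(p = 0 ∧ q = 0)) (hpq' : ¬(p' = 0 ∧ q' = 0))
    (hdp : p.degree ≤ (n : ℕ)) (hdq : q.degree ≤ (n : ℕ))
    (hdp' : p'.degree ≤ (n : ℕ)) (hdq' : q'.degree ≤ (n : ℕ))
    (h h' : ℂ → ℂ) (hh : Differentiable ℂ h) (hh' : Differentiable ℂ h')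
    (hint : ∀ w : ℂ, p.eval w * Complex.exp (-(w / 2)) + q.eval w * Complex.exp (w / 2)
      = (∏ j, (w - zpts j)) * h w)
    (hint' : ∀ w : ℂ, p'.eval w * Complex.exp (-(w / 2)) + q'.eval w * Complex.exp (w / 2)
      = (∏ j, (w - zpts j)) * h' w) :
    p * q' = p' * q :=
  interpolant_irreducible_form_unique_general n zpts p q p' q' hdp hdq hdp' hdq' h h' hh hh' hint
    hint'
end

section
/- Let $P_n(z) = p_n(2nz)$ where $(p_n, q_n)$ satisfies the diagonal interpolation conditions for $e^z$ at points $z_0,\dots,z_{2n}$, and let $\Omega_n(z) = \prod_{j=0}^{2n}(z - \hat z_j)$ with $\hat z_j = z_j/(2n)$. Let $\Gamma_n$ be a counterclockwise closed contour enclosing all scaled points $\hat z_j$. Then the orthogonality relations $\int_{\Gamma_n} z^{j} P_n(z) \frac{e^{-2nz}}{\Omega_n(z)}\, dz = 0$ hold for $j = 0, 1, \dots, n-1$. -/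
/-!
Multiplying the interpolation condition by `e^{-w/2}` and substituting `w = 2nz` gives
`p(2nz) e^{-2nz} = (2n)^{2n+1} Ω(z) h(2nz) e^{-nz} - q(2nz)`, so on the circle the integrand is
an entire function minus `z^j q(2nz) / Ω(z)`. The entire part integrates to zero by Cauchy's
theorem. The rational part has numerator degree at most `j + n ≤ 2n - 1 = deg Ω - 2`, so it is
`o(1/|z|)` at infinity; its integral does not depend on the radius and tends to zero as the
radius grows.
-/

open Complex Polynomial Filter Metric Bornology Topology
open scoped Real

theorem circleIntegral_eq_zero_of_tendsto_mul_cobounded {f : ℂ → ℂ} {r : ℝ} (hr : 0 < r)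
    (hd : ∀ z : ℂ, r ≤ ‖z‖ → DifferentiableAt ℂ f z)
    (hf : Tendsto (fun z => z * f z) (cobounded ℂ) (𝓝 0)) :
    ∮ z in C(0, r), f z = 0 := by
  have h_indep : ∀ R, r ≤ R → ∮ z in C(0, R), f z = ∮ z in C(0, r), f z := fun R hR =>
    circleIntegral_eq_of_differentiable_on_annulus_off_countable hr hR Set.countable_empty
      (fun z hz => (hd z (by simpa using hz.2)).continuousAt.continuousWithinAt)
      (fun z hz => hd z (le_of_lt (by simpa using hz.1.2)))
  refine norm_le_zero_iff.1 <| le_of_forall_pos_le_add fun ε hε => ?_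
  obtain ⟨R₀, -, hR₀⟩ := hasBasis_cobounded_norm.eventually_iff.1
    (hf.eventually (closedBall_mem_nhds 0 (div_pos hε Real.two_pi_pos)))
  set R := max r R₀
  have hR : 0 < R := hr.trans_le (le_max_left _ _)
  have hbound : ∀ z ∈ sphere (0 : ℂ) R, ‖f z‖ ≤ ε / (2 * π) / R := fun z hz => by
    have hzR : ‖z‖ = R := by simpa using hz
    have := hR₀ (show R₀ ≤ ‖z‖ from hzR ▸ le_max_right _ _)
    rw [dist_zero_right, norm_mul, hzR] at this
    rwa [le_div_iff₀ hR, mul_comm]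
  calc ‖∮ z in C(0, r), f z‖ = ‖∮ z in C(0, R), f z‖ := by rw [h_indep R (le_max_left _ _)]
    _ ≤ 2 * π * R * (ε / (2 * π) / R) :=
      circleIntegral.norm_integral_le_of_norm_le_const hR.le hbound
    _ = 0 + ε := by field_simp; ring

theorem tendsto_mul_eval_div_eval_cobounded {𝕜 : Type*} [NormedField 𝕜] {P Q : 𝕜[X]}
    (hPQ : P.natDegree + 1 < Q.natDegree) :
    Tendsto (fun z => z * (P.eval z / Q.eval z)) (cobounded 𝕜) (𝓝 0) := by
  have hdeg : (X * P).degree < Q.degree := by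
    refine degree_lt_degree ((natDegree_mul_le.trans ?_).trans_lt hPQ)
    linarith [natDegree_X_le (R := 𝕜)]
  simpa only [eval_mul, eval_X, mul_div_assoc] using
    (isLittleO_cobounded_of_degree_lt hdeg).tendsto_div_nhds_zero

theorem differentiableAt_eval_div_prod_sub {𝕜 ι : Type*} [NontriviallyNormedField 𝕜] [Fintype ι]
    (F : 𝕜[X]) {a : ι → 𝕜} {z : 𝕜} (hz : ∀ i, z ≠ a i) :
    DifferentiableAt 𝕜 (fun z => F.eval z / ∏ i, (z - a i)) z :=
  F.differentiableAt.div
    (DifferentiableAt.fun_finsetProd fun _ _ => differentiableAt_id.sub_const _)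
    (Finset.prod_ne_zero_iff.2 fun i _ => sub_ne_zero.2 (hz i))

theorem eval_mul_exp_neg_eq {ι : Type*} [Fintype ι] {p q : ℂ[X]} {w : ι → ℂ} {h : ℂ → ℂ}
    (hint : ∀ u, p.eval u * exp (-(u / 2)) + q.eval u * exp (u / 2) = (∏ i, (u - w i)) * h u)
    (u : ℂ) : p.eval u * exp (-u) = (∏ i, (u - w i)) * (h u * exp (-(u / 2))) - q.eval u := by
  have hsq : exp (-u) = exp (-(u / 2)) * exp (-(u / 2)) := by rw [← exp_add]; ring_nf
  have hinv : exp (u / 2) * exp (-(u / 2)) = 1 := by rw [← exp_add]; simp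
  linear_combination exp (-(u / 2)) * hint u + p.eval u * hsq - q.eval u * hinv

theorem prod_mul_sub_eq_pow_mul_prod {K ι : Type*} [Field K] [Fintype ι] (w : ι → K) {c : K}
    (hc : c ≠ 0) (z : K) :
    ∏ i, (c * z - w i) = c ^ Fintype.card ι * ∏ i, (z - w i / c) := by
  rw [← Finset.card_univ, ← Finset.prod_const, ← Finset.prod_mul_distrib]
  exact Finset.prod_congr rfl fun i _ => by field_simp

theorem eval_mul_exp_neg_div_prod_eq {ι : Type*} [Fintype ι] {p q : ℂ[X]} {w : ι → ℂ}
    {h : ℂ → ℂ}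
    (hint : ∀ u, p.eval u * exp (-(u / 2)) + q.eval u * exp (u / 2) = (∏ i, (u - w i)) * h u)
    {c z : ℂ} (hc : c ≠ 0) (hz : ∏ i, (z - w i / c) ≠ 0) :
    p.eval (c * z) * exp (-(c * z)) / ∏ i, (z - w i / c) =
      c ^ Fintype.card ι * (h (c * z) * exp (-(c * z / 2)))
        - q.eval (c * z) / ∏ i, (z - w i / c) := by
  rw [eval_mul_exp_neg_eq hint, prod_mul_sub_eq_pow_mul_prod w hc, sub_div, mul_right_comm,
    mul_div_cancel_right₀ _ hz]

theorem natDegree_X_pow_mul_comp_C_mul_X_le {R : Type*} [Semiring R] (q : R[X]) (j : ℕ)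
    (c : R) :
    (X ^ j * q.comp (C c * X)).natDegree ≤ j + q.natDegree := by
  refine natDegree_mul_le.trans (add_le_add (natDegree_X_pow_le j) (natDegree_comp_le.trans ?_))
  simpa using Nat.mul_le_mul_left q.natDegree (natDegree_C_mul_X_pow_le c 1)

theorem circleIntegral_eval_div_prod_sub_eq_zero {ι : Type*} [Fintype ι] {F : ℂ[X]} {a : ι → ℂ}
    {r : ℝ} (hF : F.natDegree + 2 ≤ Fintype.card ι) (ha : ∀ i, ‖a i‖ < r) :
    ∮ z in C(0, r), F.eval z / ∏ i, (z - a i) = 0 := by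
  obtain ⟨i₀⟩ : Nonempty ι := Fintype.card_pos_iff.1 (by omega)
  refine circleIntegral_eq_zero_of_tendsto_mul_cobounded ((norm_nonneg _).trans_lt (ha i₀))
    (fun z hz => differentiableAt_eval_div_prod_sub F fun i h => (ha i).not_ge (h ▸ hz)) ?_
  have hdeg : F.natDegree + 1 < (∏ i, (X - C (a i))).natDegree := by
    rw [natDegree_finsetProd_X_sub_C_eq_card, Finset.card_univ]; omega
  simpa [eval_prod] using tendsto_mul_eval_div_eval_cobounded hdeg

theorem interpolant_orthogonality_general (n : ℕ) (zpts : Fin (2 * n + 1) → ℂ)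
    (p q : Polynomial ℂ)
    (hdq : q.degree ≤ (n : ℕ))
    (h : ℂ → ℂ) (hh : Differentiable ℂ h)
    (hint : ∀ w : ℂ, p.eval w * Complex.exp (-(w / 2)) + q.eval w * Complex.exp (w / 2)
      = (∏ i, (w - zpts i)) * h w)
    (r : ℝ) (hr : ∀ i, ‖zpts i / (2 * n)‖ < r)
    (j : ℕ) (hj : j < n) :
    (∮ z in C(0, r), z ^ j * p.eval (2 * n * z) * Complex.exp (-(2 * n * z))
        / ∏ i, (z - zpts i / (2 * n))) = 0 := by
  set c : ℂ := 2 * n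
  have hc : c ≠ 0 := by simp [c]; omega
  have hr₀ : 0 ≤ r := (norm_nonneg _).trans (hr 0).le
  set Ω : ℂ → ℂ := fun z => ∏ i, (z - zpts i / c)
  set E : ℂ → ℂ := fun z => z ^ j * (c ^ (2 * n + 1) * (h (c * z) * exp (-(c * z / 2))))
  set F : ℂ[X] := X ^ j * q.comp (C c * X)
  have hne : ∀ z ∈ sphere (0 : ℂ) r, ∀ i, z ≠ zpts i / c := fun z hz i h =>
    (hr i).ne (by simp_all)
  have hsplit : Set.EqOn (fun z => z ^ j * p.eval (c * z) * exp (-(c * z)) / Ω z)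
      (fun z => E z - F.eval z / Ω z) (sphere 0 r) := fun z hz => by
    have hΩ : Ω z ≠ 0 := Finset.prod_ne_zero_iff.2 fun i _ => sub_ne_zero.2 (hne z hz i)
    simp only [E, F, Ω, mul_assoc, mul_div_assoc, eval_mul_exp_neg_div_prod_eq hint hc hΩ,
      Fintype.card_fin, eval_mul, eval_pow, eval_X, eval_comp, eval_C, mul_sub]
  have hF : F.natDegree + 2 ≤ 2 * n + 1 := by
    have hFq : F.natDegree ≤ j + q.natDegree := natDegree_X_pow_mul_comp_C_mul_X_le q j c
    have hq : q.natDegree ≤ n := natDegree_le_iff_degree_le.2 hdq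
    omega
  have hE : Differentiable ℂ E := by fun_prop
  have hR : ContinuousOn (fun z => F.eval z / Ω z) (sphere 0 r) := fun z hz =>
    (differentiableAt_eval_div_prod_sub F (hne z hz)).continuousAt.continuousWithinAt
  rw [circleIntegral.integral_congr hr₀ hsplit, circleIntegral.integral_sub
    (hE.continuous.continuousOn.circleIntegrable hr₀) (hR.circleIntegrable hr₀),
    circleIntegral_eq_zero_of_differentiable_on_off_countable hr₀ Set.countable_empty
      hE.continuous.continuousOn fun z _ => hE z,
    circleIntegral_eval_div_prod_sub_eq_zero (by simpa using hF) hr, sub_zero]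

/-- Orthogonality relations: if `(p, q)` solves the diagonal interpolation problem for
`e^z` at the points `z_j`, then the scaled polynomial `P(z) = p(2nz)` satisfies
`∮ z^j P(z) e^{-2nz} / Ω(z) dz = 0` for `j = 0, …, n-1`, over any circle `|z| = r`
enclosing all the scaled points `ẑ_j = z_j/(2n)`. -/
theorem interpolant_orthogonality (n : ℕ) (hn : 0 < n) (zpts : Fin (2 * n + 1) → ℂ)
    (p q : Polynomial ℂ)
    (hdp : p.degree ≤ (n : ℕ)) (hdq : q.degree ≤ (n : ℕ))
    (h : ℂ → ℂ) (hh : Differentiable ℂ h)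
    (hint : ∀ w : ℂ, p.eval w * Complex.exp (-(w / 2)) + q.eval w * Complex.exp (w / 2)
      = (∏ i, (w - zpts i)) * h w)
    (r : ℝ) (hr : ∀ i, ‖zpts i / (2 * n)‖ < r)
    (j : ℕ) (hj : j < n) :
    (∮ z in C(0, r), z ^ j * p.eval (2 * n * z) * Complex.exp (-(2 * n * z))
        / ∏ i, (z - zpts i / (2 * n))) = 0 :=
  interpolant_orthogonality_general n zpts p q hdq h hh hint r hr j hj
end
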